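/- Consistency obstruction: there exist a chiral merge tree M on 7 nodes and a homological sequence B of length 7 with B = (1,2,1,2,1,2,1) such that no discrete Morse function f on any tree satisfies both M_f = M and B^f = B; specifically, this holds when M is the full binary tree of depth 2 with all 4 leaves at depth 2. -/

import Mathlib

/-- A chiral merge tree: a full binary tree where each node's first child is the
left (L) child and its second child is the right (R) child. -/
inductive CMT : Type
  | leaf : CMT
  | node : CMT → CMT → CMT

/-- `t.isPos p` : the list of moves `p` (`false` = L, `true` = R) from the root
is a valid node (position) of `t`. -/
def CMT.isPos : CMT → List Bool → Prop
  | _, [] => True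
  | .leaf, _ :: _ => False
  | .node l _, false :: p => l.isPos p
  | .node _ r, true :: p => r.isPos p

/-- `t.isLeafPos p` : the position `p` is a leaf of `t`. -/
def CMT.isLeafPos : CMT → List Bool → Prop
  | .leaf, [] => True
  | .node _ _, [] => False
  | .leaf, _ :: _ => False
  | .node l _, false :: p => l.isLeafPos p
  | .node _ r, true :: p => r.isLeafPos p

/-- Number of nodes of a chiral merge tree. -/
def CMT.numNodes : CMT → ℕ
  | .leaf => 1
  | .node l r => l.numNodes + r.numNodes + 1

/-- The sublevel-connected Morse order, compared via path words.  `wle last p q` compares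
the path words `p` and `q` after a common prefix whose final letter is `last` (the root's
chirality is `L = false`): if `q` is exhausted (`q` is a prefix of `p`) then `p ≤ q`; at the
first disagreement, `p ≤ q` iff `p`'s letter equals the last common letter. -/
def wle : Bool → List Bool → List Bool → Prop
  | _, _, [] => True
  | _, [], _ :: _ => False
  | last, x :: p, y :: q => if x = y then wle x p q else x = last

/-- A (ℕ-valued) discrete Morse function on a graph `G`: weakly increasing, at most
2-to-1, and equal values occur only on an incident vertex–edge pair. -/
structure DMF {V : Type} [Fintype V] (G : SimpleGraph V) where
  fv : V → ℕ
  fe : G.edgeSet → ℕ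
  mono : ∀ (v : V) (e : G.edgeSet), v ∈ (e : Sym2 V) → fv v ≤ fe e
  fv_inj : ∀ v w : V, fv v = fv w → v = w
  fe_inj : ∀ e e' : G.edgeSet, fe e = fe e' → e = e'
  mixed : ∀ (v : V) (e : G.edgeSet), fv v = fe e → v ∈ (e : Sym2 V)

/-- The closed level subcomplex `G_a` (all simplices of value `≤ a`). -/
def DMF.subLE {V : Type} [Fintype V] {G : SimpleGraph V} (F : DMF G) (a : ℕ) :
    SimpleGraph {v : V // F.fv v ≤ a} where
  Adj u w := ∃ h : G.Adj u.1 w.1, F.fe ⟨s(u.1, w.1), h⟩ ≤ a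
  symm := by
    constructor
    rintro u w ⟨h, hle⟩
    refine ⟨h.symm, ?_⟩
    have he : (⟨s(w.1, u.1), h.symm⟩ : G.edgeSet) = ⟨s(u.1, w.1), h⟩ :=
      Subtype.ext (Sym2.eq_swap)
    rw [he]; exact hle
  loopless := by constructor; rintro u ⟨h, -⟩; exact G.irrefl h

/-- The open level subcomplex (all simplices of value `< a`), i.e. the level
subcomplex `G_{a-ε}` immediately preceding level `a`. -/
def DMF.subLT {V : Type} [Fintype V] {G : SimpleGraph V} (F : DMF G) (a : ℕ) :
    SimpleGraph {v : V // F.fv v < a} where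
  Adj u w := ∃ h : G.Adj u.1 w.1, F.fe ⟨s(u.1, w.1), h⟩ < a
  symm := by
    constructor
    rintro u w ⟨h, hle⟩
    refine ⟨h.symm, ?_⟩
    have he : (⟨s(w.1, u.1), h.symm⟩ : G.edgeSet) = ⟨s(u.1, w.1), h⟩ :=
      Subtype.ext (Sym2.eq_swap)
    rw [he]; exact hle
  loopless := by constructor; rintro u ⟨h, -⟩; exact G.irrefl h

/-- `b_0` of the level subcomplex at level `a`. -/
noncomputable def DMF.b0 {V : Type} [Fintype V] {G : SimpleGraph V} (F : DMF G) (a : ℕ) : ℕ :=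
  Nat.card (F.subLE a).ConnectedComponent

/-- A simplex (vertex or edge) is critical if no other simplex shares its value. -/
def DMF.crit {V : Type} [Fintype V] {G : SimpleGraph V} (F : DMF G) :
    V ⊕ G.edgeSet → Prop
  | .inl v => ∀ e : G.edgeSet, F.fv v ≠ F.fe e
  | .inr e => ∀ v : V, F.fv v ≠ F.fe e

/-- The value of a simplex. -/
def DMF.fval {V : Type} [Fintype V] {G : SimpleGraph V} (F : DMF G) :
    V ⊕ G.edgeSet → ℕ :=
  Sum.elim F.fv F.fe

/-- In the level subcomplex strictly below level `a`, the vertex `u` lies in the same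
connected component as the simplex `σ`. -/
def DMF.reachBelow {V : Type} [Fintype V] {G : SimpleGraph V} (F : DMF G) (a : ℕ)
    (u : {v : V // F.fv v < a}) : V ⊕ G.edgeSet → Prop
  | .inl x => ∃ hx : F.fv x < a, (F.subLT a).Reachable u ⟨x, hx⟩
  | .inr e => ∃ x, x ∈ (e : Sym2 V) ∧ ∃ hx : F.fv x < a, (F.subLT a).Reachable u ⟨x, hx⟩

/-- The merge tree induced by the discrete Morse function `F` is (isomorphic to) the
chiral merge tree `t`: there is a bijection `μ` from the nodes of `t` to the critical
simplices of `F` such that leaves correspond to critical vertices and inner nodes to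
critical edges, descendants have smaller critical values, for each inner node `p` the
two components merged by the corresponding critical edge are the components (of the
sublevel complex immediately preceding it) containing the critical simplices of the
left and right children of `p`, and the left child's component is the older one (its
leaves carry smaller values than those of the right child's component). -/
def InducesMergeTree {V : Type} [Fintype V] {G : SimpleGraph V} (t : CMT)
    (F : DMF G) : Prop :=
  ∃ μ : {p : List Bool // t.isPos p} → {σ : V ⊕ G.edgeSet // F.crit σ},
    Function.Bijective μ ∧
    (∀ p : {p : List Bool // t.isPos p},
      t.isLeafPos p.1 ↔ ∃ v : V, (μ p).1 = Sum.inl v) ∧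
    (∀ p q : {p : List Bool // t.isPos p}, q.1 <+: p.1 → q ≠ p →
      F.fval (μ p).1 < F.fval (μ q).1) ∧
    (∀ p : {p : List Bool // t.isPos p}, ¬ t.isLeafPos p.1 →
      ∃ e : G.edgeSet, (μ p).1 = Sum.inr e ∧
        ∃ (hL : t.isPos (p.1 ++ [false])) (hR : t.isPos (p.1 ++ [true])),
        ∃ u w : V, (e : Sym2 V) = s(u, w) ∧
          ∃ (hu : F.fv u < F.fe e) (hw : F.fv w < F.fe e),
            F.reachBelow (F.fe e) ⟨u, hu⟩ (μ ⟨p.1 ++ [false], hL⟩).1 ∧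
            F.reachBelow (F.fe e) ⟨w, hw⟩ (μ ⟨p.1 ++ [true], hR⟩).1) ∧
    (∀ p : {p : List Bool // t.isPos p}, ¬ t.isLeafPos p.1 →
      ∃ qL : {p : List Bool // t.isPos p}, (p.1 ++ [false]) <+: qL.1 ∧ t.isLeafPos qL.1 ∧
        ∀ qR : {p : List Bool // t.isPos p}, (p.1 ++ [true]) <+: qR.1 → t.isLeafPos qR.1 →
          F.fval (μ qL).1 < F.fval (μ qR).1)

/-- The homological sequence of `F` is `B`: enumerating the critical values of `F`
as `c_0 < c_1 < ⋯ < c_{n-1}`, the level subcomplex at `c_i` has `B i` connected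
components. -/
def HomSeqIs {V : Type} [Fintype V] {G : SimpleGraph V} (F : DMF G)
    (n : ℕ) (B : Fin n → ℕ) : Prop :=
  ∃ c : Fin n → ℕ, StrictMono c ∧
    (∀ x : ℕ, (∃ i, c i = x) ↔
      ((∃ v : V, (∀ e : G.edgeSet, F.fv v ≠ F.fe e) ∧ F.fv v = x) ∨
        (∃ e : G.edgeSet, (∀ v : V, F.fv v ≠ F.fe e) ∧ F.fe e = x))) ∧
    (∀ i : Fin n, F.b0 (c i) = B i)

/-- The number of nodes of `t` that are `≤ p` in the sublevel-connected Morse order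
(`p` itself included). -/
noncomputable def rankLe (t : CMT) (p : List Bool) : ℕ :=
  Nat.card {q : {q : List Bool // t.isPos q} // wle false q.1 p}

/-- `J_0^M (i)`: the `i`-th entry of the homological sequence induced by the merge tree
algorithm on `t`, namely the number of leaves minus the number of inner nodes among the
first `i+1` nodes of `t` in the sublevel-connected Morse order. -/
noncomputable def J0 (t : CMT) (i : ℕ) : ℕ :=
  Nat.card {p : {p : List Bool // t.isPos p} // t.isLeafPos p.1 ∧ rankLe t p.1 ≤ i + 1} -
    Nat.card {p : {p : List Bool // t.isPos p} // ¬ t.isLeafPos p.1 ∧ rankLe t p.1 ≤ i + 1}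

/-!
At the fifth critical value `c 4` the sublevel complex contains exactly five critical simplices
and has a single component. Noncritical simplices pair off, and a graph has at least
`#vertices - #edges` components, so at most one more critical vertex than critical edge is
present: at least two critical edges are. In the depth-two merge tree two merges are present only
once both children of the root have merged, and then all four leaves are present as well, which
makes six critical simplices.
-/

namespace SimpleGraph

variable {V : Type} {G : SimpleGraph V}

theorem Reachable.exists_adj_dist_lt {u v : V} (h : G.Reachable u v) (hne : u ≠ v) :
    ∃ w, G.Adj u w ∧ G.dist w v < G.dist u v := by
  obtain ⟨p, hp⟩ := h.exists_walk_length_eq_dist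
  cases p with
  | nil => exact absurd rfl hne
  | cons hadj q =>
    refine ⟨_, hadj, ?_⟩
    have := dist_le q
    rw [Walk.length_cons] at hp
    omega

/-- Every vertex other than the chosen root of its component is charged to the first edge of a
shortest path towards that root; the farther endpoint of that edge recovers the vertex. -/
theorem card_le_card_edgeSet_add_card_connectedComponent [Finite V] (G : SimpleGraph V) :
    Nat.card V ≤ Nat.card G.edgeSet + Nat.card G.ConnectedComponent := by
  choose rep hrep using fun C : G.ConnectedComponent => C.exists_rep
  let root : V → V := fun v => rep (G.connectedComponentMk v)
  have root_eq_of_adj : ∀ {v w}, G.Adj v w → root v = root w := fun h => by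
    simp only [root, ConnectedComponent.eq.mpr h.reachable]
  have reach_root : ∀ v, G.Reachable v (root v) := fun v =>
    (ConnectedComponent.exact (hrep _)).symm
  choose next hnext using fun v : {v // v ≠ root v} => (reach_root v).exists_adj_dist_lt v.2
  have hedges : Nat.card {v // v ≠ root v} ≤ Nat.card G.edgeSet := by
    refine Nat.card_le_card_of_injective (fun v => ⟨s(v.1, next v), (hnext v).1⟩) ?_
    intro v w hvw
    rcases Sym2.eq_iff.mp (congrArg Subtype.val hvw) with ⟨h, -⟩ | ⟨h₁, h₂⟩
    · exact Subtype.ext h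
    · have hroot : root v = root w := h₂ ▸ root_eq_of_adj (hnext v).1
      have hv := (hnext v).2
      have hw := (hnext w).2
      rw [h₂, hroot] at hv
      rw [← h₁] at hw
      omega
  have hroots : Nat.card {v // v = root v} ≤ Nat.card G.ConnectedComponent := by
    refine Nat.card_le_card_of_injective (fun v => G.connectedComponentMk v.1) ?_
    intro v w hvw
    exact Subtype.ext (v.2.trans ((congrArg rep hvw).trans w.2.symm))
  have hsplit : Nat.card {v // v = root v} + Nat.card {v // v ≠ root v} = Nat.card V := by
    classical
    rw [← Nat.card_sum]
    exact Nat.card_congr (Equiv.sumCompl _)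
  omega

end SimpleGraph

theorem Nat.card_and_add_card_and_not {α : Type*} [Finite α] (p q : α → Prop) :
    Nat.card {x // p x ∧ q x} + Nat.card {x // p x ∧ ¬ q x} = Nat.card {x // p x} := by
  have h := Set.ncard_inter_add_ncard_sdiff_eq_ncard {x | p x} {x | q x}
  rw [← Nat.card_coe_set_eq, ← Nat.card_coe_set_eq, ← Nat.card_coe_set_eq] at h
  exact h

namespace DMF

variable {V : Type} [Fintype V] {G : SimpleGraph V} (F : DMF G)

theorem injOn_fval_crit : Set.InjOn F.fval {σ | F.crit σ} := by
  rintro (v | e) hσ (w | e') hτ h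
  · exact congrArg _ (F.fv_inj _ _ h)
  · exact absurd h (hσ e')
  · exact absurd h.symm (hτ e)
  · exact congrArg _ (F.fe_inj _ _ h)

theorem card_edgeSet_subLE_le (a : ℕ) :
    Nat.card (F.subLE a).edgeSet ≤ Nat.card {e : G.edgeSet // F.fe e ≤ a} := by
  let ι : F.subLE a →g G := ⟨Subtype.val, fun h => h.choose⟩
  have hle : ∀ e : (F.subLE a).edgeSet, F.fe (ι.mapEdgeSet e) ≤ a := by
    rintro ⟨e, he⟩
    induction e using Sym2.ind with
    | _ u w => exact ((F.subLE a).mem_edgeSet.mp he).choose_spec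
  exact Nat.card_le_card_of_injective (fun e => ⟨ι.mapEdgeSet e, hle e⟩) fun e e' h =>
    SimpleGraph.Hom.mapEdgeSet.injective ι Subtype.val_injective (congrArg Subtype.val h)

theorem card_nonCritEdge_le_card_nonCritVertex (a : ℕ) :
    Nat.card {e : G.edgeSet // F.fe e ≤ a ∧ ¬ F.crit (.inr e)} ≤
      Nat.card {v : V // F.fv v ≤ a ∧ ¬ F.crit (.inl v)} := by
  choose v hv using fun e : {e : G.edgeSet // F.fe e ≤ a ∧ ¬ F.crit (.inr e)} => by
    simpa [DMF.crit] using e.2.2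
  refine Nat.card_le_card_of_injective
    (fun e => ⟨v e, (hv e).symm ▸ e.2.1, fun h => h _ (hv e)⟩) fun e e' h => ?_
  have h' : F.fv (v e) = F.fv (v e') := congrArg (fun x => F.fv x.1) h
  exact Subtype.ext (F.fe_inj _ _ ((hv e).symm.trans (h'.trans (hv e'))))

/-- Noncritical simplices pair off, and a graph has at least `#vertices - #edges` components. -/
theorem card_critVertex_le_b0_add (a : ℕ) :
    Nat.card {v : V // F.fv v ≤ a ∧ F.crit (.inl v)} ≤
      F.b0 a + Nat.card {e : G.edgeSet // F.fe e ≤ a ∧ F.crit (.inr e)} := by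
  have hgraph := (F.subLE a).card_le_card_edgeSet_add_card_connectedComponent
  have hedges := F.card_edgeSet_subLE_le a
  have hpairs := F.card_nonCritEdge_le_card_nonCritVertex a
  have hV := Nat.card_and_add_card_and_not (fun v : V => F.fv v ≤ a) (fun v => F.crit (.inl v))
  have hE := Nat.card_and_add_card_and_not (fun e : G.edgeSet => F.fe e ≤ a)
    (fun e => F.crit (.inr e))
  unfold b0
  omega

theorem card_crit_fval_le_eq_succ {n : ℕ} {c : Fin n → ℕ} (hc : StrictMono c)
    (hrange : Set.range c = F.fval '' {σ | F.crit σ}) (i : Fin n) :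
    Nat.card {σ : V ⊕ G.edgeSet // F.fval σ ≤ c i ∧ F.crit σ} = i + 1 := by
  have himage : F.fval '' (F.fval ⁻¹' Set.Iic (c i) ∩ {σ | F.crit σ}) = c '' Set.Iic i := by
    rw [Set.image_preimage_inter, ← hrange]
    ext x
    constructor
    · rintro ⟨hx, j, rfl⟩
      exact ⟨j, hc.le_iff_le.mp hx, rfl⟩
    · rintro ⟨j, hj, rfl⟩
      exact ⟨hc.monotone hj, j, rfl⟩
  change Nat.card ↥(F.fval ⁻¹' Set.Iic (c i) ∩ {σ | F.crit σ}) = i + 1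
  rw [Nat.card_coe_set_eq, ← (F.injOn_fval_crit.mono Set.inter_subset_right).ncard_image,
    himage, Set.ncard_image_of_injective _ hc.injective, ← Finset.coe_Iic,
    Set.ncard_coe_finset, Fin.card_Iic]

theorem card_critVertex_add_card_critEdge {n : ℕ} {c : Fin n → ℕ} (hc : StrictMono c)
    (hrange : Set.range c = F.fval '' {σ | F.crit σ}) (i : Fin n) :
    Nat.card {v : V // F.fv v ≤ c i ∧ F.crit (.inl v)} +
      Nat.card {e : G.edgeSet // F.fe e ≤ c i ∧ F.crit (.inr e)} = i + 1 := by
  rw [← Nat.card_sum, ← F.card_crit_fval_le_eq_succ hc hrange i]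
  exact Nat.card_congr (Equiv.subtypeSum (p := fun σ => F.fval σ ≤ c i ∧ F.crit σ)).symm

end DMF

theorem HomSeqIs.exists_strictMono_range_eq {V : Type} [Fintype V] {G : SimpleGraph V}
    {F : DMF G} {n : ℕ} {B : Fin n → ℕ} (h : HomSeqIs F n B) :
    ∃ c : Fin n → ℕ, StrictMono c ∧ Set.range c = F.fval '' {σ | F.crit σ} ∧
      ∀ i, F.b0 (c i) = B i := by
  obtain ⟨c, hc, hchar, hB⟩ := h
  refine ⟨c, hc, Set.ext fun x => ?_, hB⟩
  simp [hchar, Sum.exists, DMF.crit, DMF.fval]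

abbrev CMT.fullDepthTwo : CMT := .node (.node .leaf .leaf) (.node .leaf .leaf)

theorem CMT.eq_nil_or_singleton_of_isPos_fullDepthTwo {p : List Bool}
    (hp : CMT.fullDepthTwo.isPos p) (hinner : ¬ CMT.fullDepthTwo.isLeafPos p) :
    p = [] ∨ p = [false] ∨ p = [true] := by
  match p, hp, hinner with
  | [], _, _ => exact .inl rfl
  | [false], _, _ => exact .inr (.inl rfl)
  | [true], _, _ => exact .inr (.inr rfl)
  | [b, b'], _, hinner => exact absurd (by cases b <;> cases b' <;> trivial) hinner
  | b :: b' :: _ :: _, hp, _ => exfalso; cases b <;> cases b' <;> exact hp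

section

variable {V : Type} [Fintype V] {G : SimpleGraph V}

/-- `v` are the four leaves and `eL`, `eR` the merges of the two children of the root; the only
other critical edge, the root merge, comes after both. -/
theorem InducesMergeTree.exists_fullDepthTwo_shape {F : DMF G}
    (hF : InducesMergeTree CMT.fullDepthTwo F) :
    ∃ (v : Bool × Bool → V) (eL eR : G.edgeSet), Function.Injective v ∧
      (∀ x, F.crit (.inl (v x))) ∧ (∀ x, F.fv (v x) < max (F.fe eL) (F.fe eR)) ∧
      ∀ e : G.edgeSet, F.crit (.inr e) →
        e = eL ∨ e = eR ∨ max (F.fe eL) (F.fe eR) < F.fe e := by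
  obtain ⟨μ, hμ, hleaf, hlt, -, -⟩ := hF
  have below : ∀ {p q : {p // CMT.fullDepthTwo.isPos p}}, q.1 <+: p.1 → q.1 ≠ p.1 →
      F.fval (μ p).1 < F.fval (μ q).1 := fun h hne => hlt _ _ h fun e => hne (congrArg _ e)
  have edge_of_inner : ∀ p, ¬ CMT.fullDepthTwo.isLeafPos p.1 → ∃ e, (μ p).1 = .inr e := by
    intro p hp
    rcases h : (μ p).1 with v | e
    · exact absurd ((hleaf p).2 ⟨v, h⟩) hp
    · exact ⟨e, rfl⟩
  obtain ⟨eL, heL⟩ := edge_of_inner ⟨[false], trivial⟩ nofun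
  obtain ⟨eR, heR⟩ := edge_of_inner ⟨[true], trivial⟩ nofun
  have child_le : ∀ b hb, F.fval (μ ⟨[b], hb⟩).1 ≤ max (F.fe eL) (F.fe eR) := by
    rintro (_ | _) _
    · rw [heL]; exact le_max_left ..
    · rw [heR]; exact le_max_right ..
  have hchild : ∀ b, CMT.fullDepthTwo.isPos [b] := by rintro (_ | _) <;> trivial
  have hpos : ∀ x : Bool × Bool, CMT.fullDepthTwo.isPos [x.1, x.2] := by
    rintro ⟨_ | _, _ | _⟩ <;> trivial
  have hleafPos : ∀ x : Bool × Bool, CMT.fullDepthTwo.isLeafPos [x.1, x.2] := by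
    rintro ⟨_ | _, _ | _⟩ <;> trivial
  choose v hv using fun x => (hleaf ⟨_, hpos x⟩).1 (hleafPos x)
  refine ⟨v, eL, eR, fun x y hxy => ?_, fun x => hv x ▸ (μ _).2, fun x => ?_, fun e he => ?_⟩
  · have := congrArg Subtype.val (hμ.1 (Subtype.ext ((hv x).trans (hxy ▸ (hv y).symm))))
    simp only [List.cons.injEq, and_true] at this
    exact Prod.ext this.1 this.2
  · calc F.fv (v x) = F.fval (μ ⟨_, hpos x⟩).1 := by rw [hv x]; rfl
      _ < F.fval (μ ⟨[x.1], hchild _⟩).1 := below ⟨[x.2], rfl⟩ (by simp)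
      _ ≤ _ := child_le _ _
  · obtain ⟨⟨p, hp⟩, hμp⟩ := hμ.2 ⟨.inr e, he⟩
    have hσ : (μ ⟨p, hp⟩).1 = .inr e := congrArg Subtype.val hμp
    have hinner : ¬ CMT.fullDepthTwo.isLeafPos p := fun h => by
      obtain ⟨w, hw⟩ := (hleaf ⟨p, hp⟩).1 h
      rw [hσ] at hw
      cases hw
    rcases CMT.eq_nil_or_singleton_of_isPos_fullDepthTwo hp hinner with rfl | rfl | rfl
    · have hL := below (p := ⟨[false], trivial⟩) (q := ⟨[], hp⟩) List.nil_prefix (by simp)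
      have hR := below (p := ⟨[true], trivial⟩) (q := ⟨[], hp⟩) List.nil_prefix (by simp)
      rw [heL, hσ] at hL
      rw [heR, hσ] at hR
      exact .inr (.inr (max_lt hL hR))
    · exact .inl (Sum.inr_injective (hσ.symm.trans heL))
    · exact .inr (.inl (Sum.inr_injective (hσ.symm.trans heR)))

theorem InducesMergeTree.four_le_card_critVertex {F : DMF G}
    (hF : InducesMergeTree CMT.fullDepthTwo F) {a : ℕ}
    (h : 2 ≤ Nat.card {e : G.edgeSet // F.fe e ≤ a ∧ F.crit (.inr e)}) :
    4 ≤ Nat.card {v : V // F.fv v ≤ a ∧ F.crit (.inl v)} := by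
  obtain ⟨v, eL, eR, hv, hcrit, hlt, hedge⟩ := hF.exists_fullDepthTwo_shape
  have hmax : max (F.fe eL) (F.fe eR) ≤ a := by
    by_contra! ha
    have hchild : ∀ e, F.fe e ≤ a → F.crit (.inr e) → e = eL ∨ e = eR := fun e he hc =>
      (hedge e hc).imp_right fun h => h.resolve_right (by omega)
    have : Subsingleton {e : G.edgeSet // F.fe e ≤ a ∧ F.crit (.inr e)} := by
      constructor
      rintro ⟨e, he, hce⟩ ⟨e', he', hce'⟩
      rcases hchild e he hce with rfl | rfl <;> rcases hchild e' he' hce' with rfl | rfl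
      · rfl
      · exact absurd (max_le he he') ha.not_ge
      · exact absurd (max_le he' he) ha.not_ge
      · rfl
    have := Finite.card_le_one_iff_subsingleton.mpr this
    omega
  calc 4 = Nat.card (Bool × Bool) := by simp
    _ ≤ _ := Nat.card_le_card_of_injective (fun x => ⟨v x, (hlt x).le.trans hmax, hcrit x⟩)
      fun x y hxy => hv (congrArg Subtype.val hxy)

end

/-- **Consistency obstruction.**  For the full binary merge tree of depth 2 (all four
leaves at depth 2, both children of the root inner nodes) and the homological sequence
`B = (1,2,1,2,1,2,1)`, there is no discrete Morse function `f` on a tree whose induced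
merge tree is `M` and whose induced homological sequence is `B`. -/
theorem no_dmf_for_incompatible_pair :
    ¬ ∃ (V : Type) (_ : Fintype V) (G : SimpleGraph V) (F : DMF G),
        G.IsTree ∧
        InducesMergeTree (CMT.node (CMT.node .leaf .leaf) (CMT.node .leaf .leaf)) F ∧
        HomSeqIs F 7 ![1, 2, 1, 2, 1, 2, 1] := by
  rintro ⟨V, _, G, F, -, hM, hB⟩
  obtain ⟨c, hc, hrange, hb0⟩ := hB.exists_strictMono_range_eq
  have hcount := F.card_critVertex_add_card_critEdge hc hrange 4
  have hmorse := F.card_critVertex_le_b0_add (c 4)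
  have hone : F.b0 (c 4) = 1 := hb0 4
  have hleaves := hM.four_le_card_critVertex (a := c 4)
  omega
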